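/- For every integer ℓ ≥ 2, the generating function for ρ_ℓ(n) satisfies ∑_{n≥0} ρ_ℓ(n) q^n = ∏_{k≥1}(1−q^{2ℓk})/∏_{k≥1}(1−q^{2k}) − 1/(1−q^2) + q^{2ℓ}/(1−q^{2ℓ}), as formal power series. -/

import Mathlib

open PowerSeries Finset

/-- The infinite product `(q^a; q^a)_∞ = ∏_{k ≥ 1} (1 - q^{a k})`, encoded as the formal
power series whose `n`-th coefficient is the (stabilized) `n`-th coefficient of the
partial products `∏_{k=1}^{n+1} (1 - q^{a k})`.  For `a ≥ 1` this agrees with the usual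
infinite product since factors with `a k > n` do not affect the coefficient of `q^n`. -/
noncomputable def eulerProd (a : ℕ) : PowerSeries ℚ :=
  PowerSeries.mk fun n =>
    PowerSeries.coeff n (∏ k ∈ Finset.range (n + 1), (1 - (PowerSeries.X : PowerSeries ℚ) ^ (a * (k + 1))))

/-- `ρ_ℓ(n)`: the number of partitions of `n` in which the largest part `m` appears
exactly once and the remaining parts form an `ℓ`-regular partition of `m`
(no remaining part is divisible by `ℓ`). -/
noncomputable def rhoReg (ℓ n : ℕ) : ℕ :=
  Nat.card {p : n.Partition // ∃ m ∈ p.parts, p.parts.count m = 1 ∧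
    (∀ x ∈ p.parts, x ≤ m) ∧ (p.parts.erase m).sum = m ∧
    ∀ x ∈ p.parts.erase m, ¬ ℓ ∣ x}

namespace RhoAux
noncomputable section
open scoped Classical
variable {α : Type*}

/-- A convenience constructor for the power series whose coefficients indicate a subset. -/
def indicatorSeries (α : Type*) [Semiring α] (s : Set ℕ) : PowerSeries α :=
  PowerSeries.mk fun n => if n ∈ s then 1 else 0

theorem coeff_indicator (s : Set ℕ) [Semiring α] (n : ℕ) :
    coeff n (indicatorSeries α s) = if n ∈ s then 1 else 0 :=
  coeff_mk _ _

theorem coeff_indicator_pos (s : Set ℕ) [Semiring α] (n : ℕ) (h : n ∈ s) :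
    coeff n (indicatorSeries α s) = 1 := by rw [coeff_indicator, if_pos h]

theorem coeff_indicator_neg (s : Set ℕ) [Semiring α] (n : ℕ) (h : n ∉ s) :
    coeff n (indicatorSeries α s) = 0 := by rw [coeff_indicator, if_neg h]

theorem constantCoeff_indicator (s : Set ℕ) [Semiring α] :
    constantCoeff (indicatorSeries α s) = if 0 ∈ s then 1 else 0 :=
  rfl

theorem num_series' [Field α] (i : ℕ) :
    (1 - (X : PowerSeries α) ^ (i + 1))⁻¹ = indicatorSeries α {k | i + 1 ∣ k} := by
  rw [PowerSeries.inv_eq_iff_mul_eq_one]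
  · ext n
    cases n with
    | zero => simp [mul_sub, zero_pow, constantCoeff_indicator]
    | succ n =>
      simp only [coeff_one, if_false, mul_sub, mul_one, coeff_indicator,
        LinearMap.map_sub, reduceCtorEq]
      simp_rw [coeff_mul, coeff_X_pow, coeff_indicator, @boole_mul _ _ _ _]
      rw [@sum_ite _ _ _ _ _ (fun _ => Classical.propDecidable _), sum_ite]
      simp_rw [@filter_filter _ _ _ _ _, sum_const_zero, add_zero, sum_const, nsmul_eq_mul, mul_one,
        sub_eq_iff_eq_add, zero_add]
      symm
      split_ifs with h
      · suffices #{a ∈ antidiagonal (n + 1) | i + 1 ∣ a.fst ∧ a.snd = i + 1} = 1 by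
          simp only [Set.mem_setOf_eq]; convert congr_arg ((↑) : ℕ → α) this; norm_cast
        rw [card_eq_one]
        cases' h with p hp
        refine ⟨((i + 1) * (p - 1), i + 1), ?_⟩
        ext ⟨a₁, a₂⟩
        simp only [mem_filter, Prod.mk_inj, HasAntidiagonal.mem_antidiagonal, mem_singleton]
        constructor
        · rintro ⟨a_left, ⟨a, rfl⟩, rfl⟩
          refine ⟨?_, rfl⟩
          rw [Nat.mul_sub_left_distrib, ← hp, ← a_left, mul_one, Nat.add_sub_cancel]
        · rintro ⟨rfl, rfl⟩
          match p with
          | 0 => rw [mul_zero] at hp; cases hp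
          | p + 1 => rw [hp]; simp [mul_add]
      · suffices #{a ∈ antidiagonal (n + 1) | i + 1 ∣ a.fst ∧ a.snd = i + 1} = 0 by
          simp only [Set.mem_setOf_eq]; convert congr_arg ((↑) : ℕ → α) this; norm_cast
        rw [card_eq_zero]
        apply eq_empty_of_forall_notMem
        simp only [Prod.forall, mem_filter, not_and, HasAntidiagonal.mem_antidiagonal]
        rintro _ h₁ h₂ ⟨a, rfl⟩ rfl
        apply h
        simp [← h₂]
  · simp [zero_pow]

-- The main workhorse (copied from Archive/Wiedijk100Theorems/Partition.lean).
theorem partialGF_prop (α : Type*) [CommSemiring α] (n : ℕ) (s : Finset ℕ) (hs : ∀ i ∈ s, 0 < i)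
    (c : ℕ → Set ℕ) (hc : ∀ i, i ∉ s → 0 ∈ c i) :
    #{p : n.Partition | (∀ j, p.parts.count j ∈ c j) ∧ ∀ j ∈ p.parts, j ∈ s} =
      coeff n (∏ i ∈ s, indicatorSeries α ((· * i) '' c i)) := by
  simp_rw [coeff_prod, coeff_indicator, prod_boole, sum_boole]
  apply congr_arg
  simp only [mem_univ, forall_true_left, not_and, not_forall, exists_prop,
    Set.mem_image, not_exists]
  set φ : (a : Nat.Partition n) →
    a ∈ filter (fun p ↦ (∀ (j : ℕ), Multiset.count j p.parts ∈ c j) ∧ ∀ j ∈ p.parts, j ∈ s) univ →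
    ℕ →₀ ℕ := fun p _ => {
      toFun := fun i => Multiset.count i p.parts • i
      support := Finset.filter (fun i => i ≠ 0) p.parts.toFinset
      mem_support_toFun := fun a => by
        simp only [smul_eq_mul, ne_eq, mul_eq_zero, Multiset.count_eq_zero]
        rw [not_or, not_not]
        simp only [Multiset.mem_toFinset, not_not, mem_filter] }
  refine Finset.card_bij φ ?_ ?_ ?_
  · intro a ha
    simp only [φ, not_forall, not_exists, not_and, exists_prop, mem_filter]
    rw [mem_finsuppAntidiag]
    dsimp only [ne_eq, smul_eq_mul, id_eq, eq_mpr_eq_cast, le_eq_subset, Finsupp.coe_mk]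
    simp only [mem_univ, forall_true_left, not_and, not_forall, exists_prop,
      mem_filter, true_and] at ha
    refine ⟨⟨?_, fun i ↦ ?_⟩, fun i _ ↦ ⟨a.parts.count i, ha.1 i, rfl⟩⟩
    · conv_rhs => simp [← a.parts_sum]
      rw [sum_multiset_count_of_subset _ s]
      · simp only [smul_eq_mul]
      · intro i
        simp only [Multiset.mem_toFinset, not_not, mem_filter]
        apply ha.2
    · simp only [ne_eq, Multiset.mem_toFinset, not_not, mem_filter, and_imp]
      exact fun hi _ ↦ ha.2 i hi
  · intro p₁ hp₁ p₂ hp₂ h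
    apply Nat.Partition.ext
    simp only [true_and, mem_univ, mem_filter] at hp₁ hp₂
    ext i
    simp only [φ, ne_eq, Multiset.mem_toFinset, not_not, smul_eq_mul, Finsupp.mk.injEq] at h
    by_cases hi : i = 0
    · rw [hi]
      rw [Multiset.count_eq_zero_of_notMem]
      · rw [Multiset.count_eq_zero_of_notMem]
        intro a; exact Nat.lt_irrefl 0 (hs 0 (hp₂.2 0 a))
      intro a; exact Nat.lt_irrefl 0 (hs 0 (hp₁.2 0 a))
    · rw [← mul_left_inj' hi]
      rw [funext_iff] at h
      exact h.2 i
  · simp only [φ, mem_filter, mem_finsuppAntidiag, mem_univ, exists_prop, true_and, and_assoc]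
    rintro f ⟨hf, hf₃, hf₄⟩
    have hf' : f ∈ finsuppAntidiag s n := mem_finsuppAntidiag.mpr ⟨hf, hf₃⟩
    simp only [mem_finsuppAntidiag] at hf'
    refine ⟨⟨∑ i ∈ s, Multiset.replicate (f i / i) i, ?_, ?_⟩, ?_, ?_, ?_⟩
    · intro i hi
      simp only [exists_prop, Multiset.mem_sum, mem_map, Function.Embedding.coeFn_mk] at hi
      rcases hi with ⟨t, ht, z⟩
      apply hs
      rwa [Multiset.eq_of_mem_replicate z]
    · simp_rw [Multiset.sum_sum, Multiset.sum_replicate, Nat.nsmul_eq_mul]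
      rw [← hf'.1]
      refine sum_congr rfl fun i hi => Nat.div_mul_cancel ?_
      rcases hf₄ i hi with ⟨w, _, hw₂⟩
      rw [← hw₂]
      exact dvd_mul_left _ _
    · intro i
      simp_rw [Multiset.count_sum', Multiset.count_replicate, sum_ite_eq']
      split_ifs with h
      · rcases hf₄ i h with ⟨w, hw₁, hw₂⟩
        rwa [← hw₂, Nat.mul_div_cancel _ (hs i h)]
      · exact hc _ h
    · intro i hi
      rw [Multiset.mem_sum] at hi
      rcases hi with ⟨j, hj₁, hj₂⟩
      rwa [Multiset.eq_of_mem_replicate hj₂]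
    · ext i
      simp_rw [Multiset.count_sum', Multiset.count_replicate, sum_ite_eq']
      simp only [ne_eq, Multiset.mem_toFinset, not_not, smul_eq_mul, ite_mul,
        zero_mul, Finsupp.coe_mk]
      split_ifs with h
      · apply Nat.div_mul_cancel
        rcases hf₄ i h with ⟨w, _, hw₂⟩
        apply Dvd.intro_left _ hw₂
      · apply symm
        rw [← Finsupp.notMem_support_iff]
        exact notMem_mono hf'.2 h



theorem one_sub_pow_inv (i : ℕ) (hi : 0 < i) :
    (1 - (X : PowerSeries ℚ) ^ i)⁻¹ = indicatorSeries ℚ {k | i ∣ k} := by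
  obtain ⟨j, rfl⟩ := Nat.exists_eq_add_of_lt hi
  rw [zero_add]
  exact num_series' j

theorem card_parts_mem (n : ℕ) (s : Finset ℕ) (hs : ∀ i ∈ s, 0 < i) :
    (#{p : n.Partition | ∀ j ∈ p.parts, j ∈ s} : ℚ) =
      coeff n (∏ i ∈ s, (1 - (X : PowerSeries ℚ) ^ i)⁻¹) := by
  have hprod : ∀ i ∈ s, (1 - (X : PowerSeries ℚ) ^ i)⁻¹ =
      indicatorSeries ℚ ((· * i) '' (Set.univ : Set ℕ)) := by
    intro i hi
    rw [one_sub_pow_inv i (hs i hi)]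
    have hset : {k | i ∣ k} = (· * i) '' (Set.univ : Set ℕ) := by
      ext k
      simp only [Set.mem_setOf_eq, Set.image_univ, Set.mem_range]
      constructor
      · rintro ⟨c, rfl⟩; exact ⟨c, mul_comm c i⟩
      · rintro ⟨c, rfl⟩; exact Dvd.intro_left c rfl
    rw [hset]
  rw [Finset.prod_congr rfl hprod, ← partialGF_prop ℚ n s hs (fun _ => Set.univ) (fun _ _ => trivial)]
  norm_cast
  congr 1
  apply Finset.filter_congr
  intro p _
  simp

theorem coeff_mul_congr {n : ℕ} {g g' : PowerSeries ℚ}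
    (h : ∀ m ≤ n, coeff m g = coeff m g') (f : PowerSeries ℚ) :
    ∀ m ≤ n, coeff m (f * g) = coeff m (f * g') := by
  intro m hm
  rw [coeff_mul, coeff_mul]
  refine Finset.sum_congr rfl fun x hx => ?_
  rw [HasAntidiagonal.mem_antidiagonal] at hx
  rw [h x.2 (le_trans (le_of_add_le_right hx.le) hm)]

theorem coeff_mul_one_sub_pow {n t : ℕ} (ht : n < t) (f : PowerSeries ℚ) :
    ∀ m ≤ n, coeff m (f * (1 - X ^ t)) = coeff m f := by
  intro m hm
  rw [mul_sub, mul_one, map_sub, coeff_mul_X_pow', if_neg (by omega), sub_zero]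

theorem coeff_mul_prod_high {n : ℕ} (s : Finset ℕ) (e : ℕ → ℕ) (he : ∀ i ∈ s, n < e i)
    (f : PowerSeries ℚ) :
    ∀ m ≤ n, coeff m (f * ∏ i ∈ s, (1 - (X : PowerSeries ℚ) ^ e i)) = coeff m f := by
  classical
  induction s using Finset.induction_on with
  | empty => simp
  | insert a s' ha ih =>
    intro m hm
    rw [Finset.prod_insert ha, show f * ((1 - X ^ e a) * ∏ i ∈ s', (1 - (X:PowerSeries ℚ) ^ e i))
        = (f * ∏ i ∈ s', (1 - (X:PowerSeries ℚ) ^ e i)) * (1 - X ^ e a) by ring,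
      coeff_mul_one_sub_pow (he a (Finset.mem_insert_self a s')) _ m hm]
    exact ih (fun i hi => he i (Finset.mem_insert_of_mem hi)) m hm

theorem coeff_eulerProd {a : ℕ} (ha : 1 ≤ a) (N m : ℕ) (hm : m < N) :
    coeff m (eulerProd a) =
      coeff m (∏ k ∈ range N, (1 - (X : PowerSeries ℚ) ^ (a * (k + 1)))) := by
  rw [eulerProd, coeff_mk]
  have hsplit : (∏ k ∈ range N, (1 - (X : PowerSeries ℚ) ^ (a * (k + 1)))) =
      (∏ k ∈ range (m+1), (1 - (X : PowerSeries ℚ) ^ (a * (k + 1)))) *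
      ∏ k ∈ Finset.Ico (m+1) N, (1 - (X : PowerSeries ℚ) ^ (a * (k + 1))) := by
    rw [Finset.range_eq_Ico, Finset.range_eq_Ico]
    exact (Finset.prod_Ico_consecutive (fun k => (1 - (X : PowerSeries ℚ) ^ (a * (k + 1)))) (Nat.zero_le (m+1)) hm).symm
  rw [hsplit, coeff_mul_prod_high (n := m) _ _ (fun i hi => by
    rw [Finset.mem_Ico] at hi; nlinarith [hi.1]) _ m le_rfl]

def Sfin (ℓ n : ℕ) : Finset ℕ := (range (n+1)).filter (fun j => 2 ∣ j ∧ ¬ (2*ℓ) ∣ j)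

def Tfin (ℓ K : ℕ) : Finset ℕ := (range (2*ℓ*K+1)).filter (fun j => 2 ∣ j ∧ ¬ (2*ℓ) ∣ j)

def creg (ℓ n : ℕ) : ℕ := #{p : n.Partition | ∀ j ∈ p.parts, 2 ∣ j ∧ ¬ (2*ℓ) ∣ j}

def rreg (ℓ m : ℕ) : ℕ := #{p : m.Partition | ∀ j ∈ p.parts, ¬ ℓ ∣ j}

theorem Sfin_pos {ℓ n : ℕ} : ∀ i ∈ Sfin ℓ n, 0 < i := by
  intro i hi
  simp only [Sfin, mem_filter, mem_range] at hi
  rcases Nat.eq_zero_or_pos i with rfl | h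
  · exact absurd (dvd_zero _) hi.2.2
  · exact h

theorem creg_coeff {ℓ : ℕ} (n : ℕ) :
    ∀ m ≤ n, (creg ℓ m : ℚ) =
      coeff m (∏ i ∈ Sfin ℓ n, (1 - (X : PowerSeries ℚ) ^ i)⁻¹) := by
  intro m hm
  rw [← card_parts_mem m (Sfin ℓ n) Sfin_pos, creg]
  norm_cast
  congr 1
  apply Finset.filter_congr
  intro p _
  constructor
  · intro h j hj
    have hjm : j ≤ m := by
      simpa [p.parts_sum] using Multiset.single_le_sum (fun _ _ => Nat.zero_le _) _ hj
    simp only [Sfin, mem_filter, mem_range]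
    exact ⟨by omega, h j hj⟩
  · intro h j hj
    have := h j hj
    simp only [Sfin, mem_filter, mem_range] at this
    exact this.2

theorem prod_range_shift (M : ℕ) (f : ℕ → PowerSeries ℚ) :
    ∏ k ∈ range M, f (k+1) = ∏ j ∈ Finset.Icc 1 M, f j := by
  rw [← Finset.Ico_add_one_right_eq_Icc, Finset.prod_Ico_eq_prod_range]
  simp only [Nat.add_sub_cancel, Nat.succ_sub_one]
  exact Finset.prod_congr rfl fun k _ => by rw [add_comm]

theorem prod_split {ℓ : ℕ} (hℓ : 2 ≤ ℓ) (K : ℕ) :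
    ∏ k ∈ range (ℓ*K), (1 - (X : PowerSeries ℚ) ^ (2*(k+1))) =
      (∏ k ∈ range K, (1 - (X : PowerSeries ℚ) ^ (2*ℓ*(k+1)))) *
        ∏ i ∈ Tfin ℓ K, (1 - (X : PowerSeries ℚ) ^ i) := by
  simp only [mul_assoc]
  rw [prod_range_shift (ℓ*K) (fun j => 1 - (X : PowerSeries ℚ) ^ (2*j)),
    ← Finset.prod_filter_mul_prod_filter_not (Finset.Icc 1 (ℓ*K)) (fun j => ℓ ∣ j)]
  congr 1
  · rw [prod_range_shift K (fun j => 1 - (X : PowerSeries ℚ) ^ (2*(ℓ*j)))]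
    symm
    apply Finset.prod_nbij (fun i => ℓ * i)
    · intro a ha
      simp only [Finset.mem_coe, Finset.mem_Icc] at ha
      simp only [Finset.mem_coe, Finset.mem_filter, Finset.mem_Icc]
      exact ⟨⟨Nat.one_le_iff_ne_zero.2 (Nat.mul_ne_zero (by omega) (by omega)),
        Nat.mul_le_mul_left ℓ ha.2⟩, dvd_mul_right ℓ a⟩
    · intro a _ b _ h
      dsimp only at h
      exact Nat.eq_of_mul_eq_mul_left (by omega) h
    · intro j hj
      simp only [Finset.coe_filter, Finset.mem_coe, Finset.mem_Icc, Set.mem_setOf_eq] at hj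
      obtain ⟨⟨h1, h2⟩, c, rfl⟩ := hj
      refine ⟨c, ?_, rfl⟩
      simp only [Finset.mem_coe, Finset.mem_Icc]
      constructor
      · rcases Nat.eq_zero_or_pos c with rfl | h
        · omega
        · exact h
      · exact Nat.le_of_mul_le_mul_left h2 (by omega)
    · intro a _; rfl
  · apply Finset.prod_nbij (fun j => 2 * j)
    · intro a ha
      simp only [Finset.mem_coe, Finset.mem_filter, Finset.mem_Icc] at ha
      simp only [Tfin, Finset.mem_coe, Finset.mem_filter, Finset.mem_range]
      refine ⟨by rw [mul_assoc]; omega, Dvd.intro a rfl, fun hd => ha.2 ?_⟩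
      obtain ⟨c, hc⟩ := hd
      rw [mul_assoc] at hc
      exact ⟨c, Nat.eq_of_mul_eq_mul_left (by norm_num) hc⟩
    · intro a _ b _ h
      dsimp only at h
      omega
    · intro i hi
      simp only [Tfin, Finset.coe_filter, Finset.mem_coe, Finset.mem_range,
        Set.mem_setOf_eq] at hi
      obtain ⟨h1, ⟨c, rfl⟩, h3⟩ := hi
      rw [mul_assoc] at h1
      refine ⟨c, ?_, rfl⟩
      simp only [Finset.coe_filter, Finset.mem_coe, Finset.mem_Icc, Set.mem_setOf_eq]
      have hc0 : c ≠ 0 := by rintro rfl; exact h3 (by simp)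
      refine ⟨⟨by omega, by omega⟩, fun hd => h3 ?_⟩
      obtain ⟨d, rfl⟩ := hd
      exact ⟨d, by ring⟩
    · intro a _; rfl

theorem constCoeff_one_sub (i : ℕ) (hi : 0 < i) :
    constantCoeff (1 - (X : PowerSeries ℚ) ^ i) = 1 := by
  simp [zero_pow hi.ne']

theorem eulerProd_eq {ℓ : ℕ} (hℓ : 2 ≤ ℓ) :
    eulerProd (2*ℓ) = eulerProd 2 * PowerSeries.mk (fun n => (creg ℓ n : ℚ)) := by
  ext n
  set B := PowerSeries.mk (fun n => (creg ℓ n : ℚ)) with hB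
  set Binv := ∏ i ∈ Sfin ℓ n, (1 - (X : PowerSeries ℚ) ^ i)⁻¹ with hBinv
  have h1 : coeff n (eulerProd 2 * B) = coeff n
      ((∏ k ∈ range (ℓ*(n+1)), (1 - (X : PowerSeries ℚ) ^ (2*(k+1)))) * B) := by
    rw [mul_comm, mul_comm _ B]
    exact coeff_mul_congr (fun m hm => coeff_eulerProd (by omega) _ m (by nlinarith)) B n le_rfl
  have h2 : coeff n
      ((∏ k ∈ range (ℓ*(n+1)), (1 - (X : PowerSeries ℚ) ^ (2*(k+1)))) * B) = coeff n
      ((∏ k ∈ range (ℓ*(n+1)), (1 - (X : PowerSeries ℚ) ^ (2*(k+1)))) * Binv) := by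
    apply coeff_mul_congr (fun m hm => ?_) _ n le_rfl
    rw [hB, coeff_mk]
    exact creg_coeff n m hm
  have hTS : Sfin ℓ n ⊆ Tfin ℓ (n+1) := by
    intro j hj
    simp only [Sfin, Tfin, mem_filter, mem_range] at hj ⊢
    refine ⟨by nlinarith [hj.1], hj.2⟩
  have h3 : (∏ k ∈ range (ℓ*(n+1)), (1 - (X : PowerSeries ℚ) ^ (2*(k+1)))) * Binv =
      (∏ k ∈ range (n+1), (1 - (X : PowerSeries ℚ) ^ (2*ℓ*(k+1)))) *
        ∏ i ∈ Tfin ℓ (n+1) \ Sfin ℓ n, (1 - (X : PowerSeries ℚ) ^ i) := by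
    rw [prod_split hℓ (n+1), ← Finset.prod_sdiff hTS, hBinv]
    rw [show ∀ A C D E : PowerSeries ℚ, A * (C * D) * E = A * C * (D * E) from fun _ _ _ _ => by ring]
    rw [← Finset.prod_mul_distrib]
    rw [Finset.prod_congr rfl (fun i hi =>
      PowerSeries.mul_inv_cancel _ (by rw [constCoeff_one_sub i (Sfin_pos i hi)]; norm_num))]
    rw [Finset.prod_const_one, mul_one]
  have hgt : ∀ i ∈ Tfin ℓ (n+1) \ Sfin ℓ n, n < i := by
    intro i hi
    rw [Finset.mem_sdiff] at hi
    obtain ⟨hiT, hiS⟩ := hi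
    simp only [Tfin, Sfin, mem_filter, mem_range] at hiT hiS
    by_contra h
    push_neg at h
    exact hiS ⟨by omega, hiT.2⟩
  rw [coeff_eulerProd (show (1:ℕ) ≤ 2*ℓ by omega) (n+1) n (by omega), h1, h2, h3]
  exact (coeff_mul_prod_high (n := n) _ (fun i => i) hgt _ n le_rfl).symm
theorem sum_map_two_mul (s : Multiset ℕ) : (s.map (fun x => 2 * x)).sum = 2 * s.sum := by
  induction s using Multiset.induction with
  | empty => simp
  | cons a s ih => simp [Multiset.map_cons, ih, mul_add]

/-- double a partition of m to an even partition of 2m -/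
def doubleP (m : ℕ) (p : m.Partition) : (2*m).Partition where
  parts := p.parts.map (fun x => 2 * x)
  parts_pos := by
    intro x hx
    obtain ⟨y, hy, rfl⟩ := Multiset.mem_map.1 hx
    have := p.parts_pos hy
    omega
  parts_sum := by rw [sum_map_two_mul, p.parts_sum]

theorem creg_two_mul {ℓ : ℕ} (hℓ : 2 ≤ ℓ) (m : ℕ) : creg ℓ (2*m) = rreg ℓ m := by
  symm
  rw [creg, rreg]
  apply Finset.card_bij (fun p _ => doubleP m p)
  · intro p hp
    simp only [mem_filter, mem_univ, true_and] at hp ⊢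
    intro j hj
    obtain ⟨y, hy, rfl⟩ := Multiset.mem_map.1 hj
    refine ⟨⟨y, rfl⟩, fun hd => hp y hy ?_⟩
    obtain ⟨c, hc⟩ := hd
    rw [mul_assoc] at hc
    exact ⟨c, Nat.eq_of_mul_eq_mul_left (by norm_num) hc⟩
  · intro p₁ _ p₂ _ h
    apply Nat.Partition.ext
    have := congrArg Nat.Partition.parts h
    exact Multiset.map_injective (fun a b hab => by omega) this
  · intro q hq
    simp only [mem_filter, mem_univ, true_and] at hq
    have hmap : (q.parts.map (fun x => x / 2)).map (fun x => 2 * x) = q.parts := by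
      rw [Multiset.map_map]
      have : ∀ x ∈ q.parts, (fun x => 2 * x) ((fun x => x / 2) x) = id x := by
        intro x hx
        have h2 := (hq x hx).1
        simp only [id_eq]
        omega
      calc Multiset.map ((fun x => 2 * x) ∘ fun x => x / 2) q.parts
          = Multiset.map id q.parts := Multiset.map_congr rfl this
        _ = q.parts := Multiset.map_id _
    refine ⟨⟨q.parts.map (fun x => x / 2), ?_, ?_⟩, ?_, ?_⟩
    · intro x hx
      obtain ⟨y, hy, rfl⟩ := Multiset.mem_map.1 hx
      have h2 := (hq y hy).1
      have h0 := q.parts_pos hy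
      omega
    · have := congrArg Multiset.sum hmap
      rw [sum_map_two_mul, q.parts_sum] at this
      omega
    · simp only [mem_filter, mem_univ, true_and]
      intro j hj
      obtain ⟨y, hy, rfl⟩ := Multiset.mem_map.1 hj
      intro hd
      obtain ⟨c, hc⟩ := hd
      have h2 := (hq y hy).1
      refine (hq y hy).2 ⟨c, by rw [mul_assoc]; omega⟩
    · apply Nat.Partition.ext
      exact hmap

theorem creg_odd {ℓ n : ℕ} (h : ¬ 2 ∣ n) : creg ℓ n = 0 := by
  rw [creg, Finset.card_eq_zero, Finset.filter_eq_empty_iff]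
  intro p _ hP
  exact h (p.parts_sum ▸ Multiset.dvd_sum (fun x hx => (hP x hx).1))

theorem rho_pred (ℓ n : ℕ) : rhoReg ℓ n =
    #{p : n.Partition | ∃ m ∈ p.parts, p.parts.count m = 1 ∧
      (∀ x ∈ p.parts, x ≤ m) ∧ (p.parts.erase m).sum = m ∧
      ∀ x ∈ p.parts.erase m, ¬ ℓ ∣ x} := by
  rw [rhoReg, Nat.card_eq_fintype_card, Fintype.card_subtype]

theorem rho_odd {ℓ n : ℕ} (h : ¬ 2 ∣ n) : rhoReg ℓ n = 0 := by
  rw [rho_pred, Finset.card_eq_zero, Finset.filter_eq_empty_iff]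
  rintro p _ ⟨m, hmem, _, _, hsum, _⟩
  apply h
  have hps : p.parts = m ::ₘ p.parts.erase m := (Multiset.cons_erase hmem).symm
  have := p.parts_sum
  rw [hps, Multiset.sum_cons, hsum] at this
  exact ⟨m, by omega⟩

theorem rhoReg_zero (ℓ : ℕ) : rhoReg ℓ 0 = 0 := by
  rw [rho_pred, Finset.card_eq_zero, Finset.filter_eq_empty_iff]
  rintro p _ ⟨m, hmem, _⟩
  have h1 := p.parts_pos hmem
  have h2 : m ≤ 0 := by
    simpa [p.parts_sum] using Multiset.single_le_sum (fun _ _ => Nat.zero_le _) _ hmem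
  omega

theorem rreg_zero (ℓ : ℕ) : rreg ℓ 0 = 1 := by
  rw [rreg]
  have : ∀ p : Nat.Partition 0, ∀ j ∈ p.parts, ¬ ℓ ∣ j := by
    intro p j hj
    have h1 := p.parts_pos hj
    have h2 : j ≤ 0 := by
      simpa [p.parts_sum] using Multiset.single_le_sum (fun _ _ => Nat.zero_le _) _ hj
    omega
  rw [Finset.filter_true_of_mem (fun p _ => this p), Finset.card_univ, Fintype.card_unique]

/-- prepend the largest part m -/
def consP (m : ℕ) (hm : 1 ≤ m) (p : m.Partition) : (2*m).Partition where
  parts := m ::ₘ p.parts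
  parts_pos := by
    intro x hx
    rcases Multiset.mem_cons.1 hx with rfl | hx
    · omega
    · exact p.parts_pos hx
  parts_sum := by rw [Multiset.sum_cons, p.parts_sum]; omega

theorem rho_even {ℓ : ℕ} (hℓ : 2 ≤ ℓ) {m : ℕ} (hm : 1 ≤ m) :
    rhoReg ℓ (2*m) + (if ℓ ∣ m then 0 else 1) = rreg ℓ m := by
  have hstep1 : rhoReg ℓ (2*m) =
      #{p : m.Partition | (∀ j ∈ p.parts, ¬ ℓ ∣ j) ∧ m ∉ p.parts} := by
    rw [rho_pred]
    symm
    apply Finset.card_bij (fun p _ => consP m hm p)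
    · intro p hp
      simp only [mem_filter, mem_univ, true_and] at hp ⊢
      obtain ⟨hreg, hnotmem⟩ := hp
      refine ⟨m, Multiset.mem_cons_self m _, ?_, ?_, ?_, ?_⟩
      · show Multiset.count m (m ::ₘ p.parts) = 1
        rw [Multiset.count_cons_self, Multiset.count_eq_zero.2 hnotmem]
      · intro x hx
        rcases Multiset.mem_cons.1 hx with rfl | hx
        · exact le_refl x
        · calc x ≤ p.parts.sum := Multiset.single_le_sum (fun _ _ => Nat.zero_le _) _ hx
            _ = m := p.parts_sum
      · show ((m ::ₘ p.parts).erase m).sum = m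
        rw [Multiset.erase_cons_head, p.parts_sum]
      · show ∀ x ∈ (m ::ₘ p.parts).erase m, ¬ ℓ ∣ x
        rw [Multiset.erase_cons_head]
        exact hreg
    · intro p₁ _ p₂ _ h
      apply Nat.Partition.ext
      have := congrArg Nat.Partition.parts h
      exact (Multiset.cons_inj_right m).1 this
    · intro q hq
      simp only [mem_filter, mem_univ, true_and] at hq
      obtain ⟨m', hmem, hcount, hle, hsum, hreg⟩ := hq
      have hsum2 := q.parts_sum
      have hq2 : q.parts = m' ::ₘ q.parts.erase m' := (Multiset.cons_erase hmem).symm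
      rw [hq2, Multiset.sum_cons, hsum] at hsum2
      have hmm : m = m' := by omega
      subst hmm
      have hnotmem : m ∉ q.parts.erase m := by
        rw [← Multiset.count_eq_zero, Multiset.count_erase_self, hcount]
      refine ⟨⟨q.parts.erase m, fun {x} hx => q.parts_pos (Multiset.mem_of_mem_erase hx), hsum⟩,
        ?_, ?_⟩
      · simp only [mem_filter, mem_univ, true_and]
        exact ⟨hreg, hnotmem⟩
      · apply Nat.Partition.ext
        show m ::ₘ q.parts.erase m = q.parts
        exact Multiset.cons_erase hmem
  have hstep2 : (#{p : m.Partition | (∀ j ∈ p.parts, ¬ ℓ ∣ j) ∧ m ∈ p.parts} : ℕ) =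
      if ℓ ∣ m then 0 else 1 := by
    split_ifs with hd
    · rw [Finset.card_eq_zero, Finset.filter_eq_empty_iff]
      rintro p _ ⟨hreg, hmem⟩
      exact hreg m hmem hd
    · rw [Finset.card_eq_one]
      refine ⟨Nat.Partition.indiscrete m, ?_⟩
      ext p
      simp only [mem_filter, mem_univ, true_and, Finset.mem_singleton]
      constructor
      · rintro ⟨hreg, hmem⟩
        apply Nat.Partition.ext
        rw [Nat.Partition.indiscrete_parts (by omega)]
        have hq2 : p.parts = m ::ₘ p.parts.erase m := (Multiset.cons_erase hmem).symm
        have hsum2 := p.parts_sum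
        rw [hq2, Multiset.sum_cons] at hsum2
        have hzero : p.parts.erase m = 0 := by
          apply Multiset.eq_zero_of_forall_notMem
          intro x hx
          have h1 := p.parts_pos (Multiset.mem_of_mem_erase hx)
          have h2 : x ≤ (p.parts.erase m).sum :=
            Multiset.single_le_sum (fun _ _ => Nat.zero_le _) _ hx
          omega
        rw [hq2, hzero]
        rfl
      · rintro rfl
        rw [Nat.Partition.indiscrete_parts (by omega)]
        exact ⟨fun j hj => by rw [Multiset.mem_singleton.1 hj]; exact hd, Multiset.mem_singleton.2 rfl⟩
  have hsplit : #{p : m.Partition | (∀ j ∈ p.parts, ¬ ℓ ∣ j) ∧ m ∉ p.parts} +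
      #{p : m.Partition | (∀ j ∈ p.parts, ¬ ℓ ∣ j) ∧ m ∈ p.parts} = rreg ℓ m := by
    rw [rreg]
    rw [show (filter (fun p : Nat.Partition m => (∀ j ∈ p.parts, ¬ ℓ ∣ j) ∧ m ∉ p.parts) univ)
        = filter (fun p => m ∉ p.parts) (filter (fun p => ∀ j ∈ p.parts, ¬ ℓ ∣ j) univ) by
      rw [Finset.filter_filter],
      show (filter (fun p : Nat.Partition m => (∀ j ∈ p.parts, ¬ ℓ ∣ j) ∧ m ∈ p.parts) univ)
        = filter (fun p => ¬ (m ∉ p.parts)) (filter (fun p => ∀ j ∈ p.parts, ¬ ℓ ∣ j) univ) by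
      rw [Finset.filter_filter]; simp only [not_not]]
    exact Finset.card_filter_add_card_filter_not _
  rw [hstep1, ← hsplit, hstep2]

theorem constCoeff_eulerProd_two : constantCoeff (eulerProd 2) ≠ 0 := by
  rw [← coeff_zero_eq_constantCoeff_apply, eulerProd, coeff_mk]
  simp [zero_pow]

theorem eulerProd_ratio {ℓ : ℕ} (hℓ : 2 ≤ ℓ) :
    eulerProd (2*ℓ) * (eulerProd 2)⁻¹ = PowerSeries.mk (fun n => (creg ℓ n : ℚ)) := by
  rw [eulerProd_eq hℓ, mul_comm (eulerProd 2), mul_assoc,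
    PowerSeries.mul_inv_cancel _ constCoeff_eulerProd_two, mul_one]

theorem main {ℓ : ℕ} (hℓ : 2 ≤ ℓ) :
    PowerSeries.mk (fun n => (rhoReg ℓ n : ℚ)) =
      eulerProd (2 * ℓ) * (eulerProd 2)⁻¹
        - (1 - (PowerSeries.X : PowerSeries ℚ) ^ 2)⁻¹
        + (PowerSeries.X : PowerSeries ℚ) ^ (2 * ℓ)
            * (1 - (PowerSeries.X : PowerSeries ℚ) ^ (2 * ℓ))⁻¹ := by
  rw [eulerProd_ratio hℓ, one_sub_pow_inv 2 (by norm_num),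
    one_sub_pow_inv (2*ℓ) (by omega)]
  ext n
  rw [map_add, map_sub, coeff_mk, coeff_mk, coeff_indicator, coeff_X_pow_mul', coeff_indicator]
  simp only [Set.mem_setOf_eq]
  by_cases h2 : 2 ∣ n
  · obtain ⟨m, rfl⟩ := h2
    rw [creg_two_mul hℓ m, if_pos ⟨m, rfl⟩]
    rcases Nat.eq_zero_or_pos m with rfl | hm
    · rw [rhoReg_zero, rreg_zero, if_neg (by omega)]
      norm_num
    · have hkey := rho_even hℓ hm
      by_cases hd : ℓ ∣ m
      · rw [if_pos hd] at hkey
        have h1 : 2 * ℓ ≤ 2 * m := by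
          have := Nat.le_of_dvd hm hd
          omega
        rw [if_pos h1, if_pos (Nat.dvd_sub (mul_dvd_mul_left 2 hd) dvd_rfl)]
        push_cast [← hkey]
        ring
      · rw [if_neg hd] at hkey
        have h3 : ¬ (2 * ℓ ≤ 2 * m ∧ 2 * ℓ ∣ 2 * m - 2 * ℓ) := by
          rintro ⟨ha, hb⟩
          apply hd
          have hdvd : 2 * ℓ ∣ 2 * m := by
            have := Nat.sub_add_cancel ha
            rw [← this]
            exact dvd_add hb dvd_rfl
          obtain ⟨c, hc⟩ := hdvd
          rw [mul_assoc] at hc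
          exact ⟨c, by omega⟩
        split_ifs with hx hy
        · exact absurd ⟨hx, hy⟩ h3
        · push_cast [← hkey]; ring
        · push_cast [← hkey]; ring
  · rw [rho_odd h2, creg_odd h2, if_neg h2]
    split_ifs with hx hy
    · exfalso
      apply h2
      have h5 : 2 ∣ n - 2 * ℓ := dvd_trans ⟨ℓ, rfl⟩ hy
      omega
    · norm_num
    · norm_num

end
end RhoAux

/-- `∑ ρ_ℓ(n) q^n = (q^{2ℓ};q^{2ℓ})_∞/(q^2;q^2)_∞ − 1/(1−q^2) + q^{2ℓ}/(1−q^{2ℓ})`. -/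
theorem rhoReg_generating_function (ℓ : ℕ) (hℓ : 2 ≤ ℓ) :
    PowerSeries.mk (fun n => (rhoReg ℓ n : ℚ)) =
      eulerProd (2 * ℓ) * (eulerProd 2)⁻¹
        - (1 - (PowerSeries.X : PowerSeries ℚ) ^ 2)⁻¹
        + (PowerSeries.X : PowerSeries ℚ) ^ (2 * ℓ)
            * (1 - (PowerSeries.X : PowerSeries ℚ) ^ (2 * ℓ))⁻¹ := by
  exact RhoAux.main hℓ
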